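/- Let S₀, S₁, … be a saturation with respect to the PaRC calculus. For every j ≥ 0, a ground clause is redundant with respect to S_j* if and only if it is redundant with respect to ⌊S_j⌋. -/

import Mathlib

set_option autoImplicit false

namespace PaRC

/-- First-order terms over a signature `F` with arity function `ar`;
variables are natural numbers. -/
inductive Trm (F : Type) (ar : F → ℕ) : Type
  | var : ℕ → Trm F ar
  | app : (f : F) → (Fin (ar f) → Trm F ar) → Trm F ar

variable {F : Type} {ar : F → ℕ}

/-- Substitutions. -/
abbrev Subst (F : Type) (ar : F → ℕ) : Type := ℕ → Trm F ar

/-- Applying a substitution to a term. -/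
def Trm.subst (σ : Subst F ar) : Trm F ar → Trm F ar
  | .var x => σ x
  | .app f a => .app f (fun i => (a i).subst σ)

/-- Composition of substitutions. -/
def Subst.comp (σ τ : Subst F ar) : Subst F ar := fun x => Trm.subst τ (σ x)

/-- A term is ground if it contains no variables. -/
def Trm.IsGround : Trm F ar → Prop
  | .var _ => False
  | .app _ a => ∀ i, (a i).IsGround

/-- Free variables of a term. -/
def Trm.fvars : Trm F ar → Set ℕ
  | .var x => {x}
  | .app _ a => ⋃ i, (a i).fvars

/-- Subterm at a position (list of argument indices). -/
def Trm.atPos : Trm F ar → List ℕ → Option (Trm F ar)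
  | t, [] => some t
  | .var _, _ :: _ => none
  | .app f a, i :: p => if h : i < ar f then Trm.atPos (a ⟨i, h⟩) p else none

/-- Replace the subterm at a given position. -/
def Trm.replace : Trm F ar → List ℕ → Trm F ar → Trm F ar
  | _, [], u => u
  | .var x, _ :: _, _ => .var x
  | .app f a, i :: p, u =>
      if h : i < ar f then
        .app f (Function.update a ⟨i, h⟩ (Trm.replace (a ⟨i, h⟩) p u))
      else .app f a

/-- An equality literal: polarity together with the two sides. -/
structure Lit (F : Type) (ar : F → ℕ) : Type where
  pos : Bool
  lhs : Trm F ar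
  rhs : Trm F ar

def Lit.subst (σ : Subst F ar) (L : Lit F ar) : Lit F ar :=
  ⟨L.pos, Trm.subst σ L.lhs, Trm.subst σ L.rhs⟩

def Lit.IsGround (L : Lit F ar) : Prop := L.lhs.IsGround ∧ L.rhs.IsGround

def Lit.fvars (L : Lit F ar) : Set ℕ := L.lhs.fvars ∪ L.rhs.fvars

/-- A clause is a (finite) multiset of literals. -/
abbrev Clause (F : Type) (ar : F → ℕ) : Type := Multiset (Lit F ar)

def Clause.subst (σ : Subst F ar) (C : Clause F ar) : Clause F ar := C.map (Lit.subst σ)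

def Clause.IsGround (C : Clause F ar) : Prop := ∀ L ∈ C, L.IsGround

def Clause.fvars (C : Clause F ar) : Set ℕ := {x | ∃ L ∈ C, x ∈ L.fvars}

/-- A substitution is grounding for a clause if the instance is ground. -/
def GroundingFor (θ : Subst F ar) (C : Clause F ar) : Prop :=
  Clause.IsGround (Clause.subst θ C)

/-- A term occurs in a clause if it is a subterm of a side of one of its literals. -/
def OccursIn (u : Trm F ar) (C : Clause F ar) : Prop :=
  ∃ L ∈ C, ∃ p, Trm.atPos L.lhs p = some u ∨ Trm.atPos L.rhs p = some u

/-! ### Semantics: Σ-algebras, entailment and satisfiability -/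

/-- A Σ-algebra (first-order structure for the purely equational signature). -/
structure Alg (F : Type) (ar : F → ℕ) : Type 1 where
  carrier : Type
  nonempty : Nonempty carrier
  interp : (f : F) → (Fin (ar f) → carrier) → carrier

def Trm.eval (A : Alg F ar) (v : ℕ → A.carrier) : Trm F ar → A.carrier
  | .var x => v x
  | .app f a => A.interp f (fun i => (a i).eval A v)

def Lit.holds (A : Alg F ar) (v : ℕ → A.carrier) (L : Lit F ar) : Prop :=
  if L.pos then L.lhs.eval A v = L.rhs.eval A v else L.lhs.eval A v ≠ L.rhs.eval A v

/-- A clause is true in an algebra if it is true under every valuation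
(variables are implicitly universally quantified). -/
def Clause.validIn (A : Alg F ar) (C : Clause F ar) : Prop :=
  ∀ v : ℕ → A.carrier, ∃ L ∈ C, Lit.holds A v L

/-- First-order entailment between a set of clauses and a clause. -/
def Entails (S : Set (Clause F ar)) (D : Clause F ar) : Prop :=
  ∀ A : Alg F ar, (∀ C ∈ S, Clause.validIn A C) → Clause.validIn A D

/-- Satisfiability of a set of clauses. -/
def Satisfiable (S : Set (Clause F ar)) : Prop :=
  ∃ A : Alg F ar, ∀ C ∈ S, Clause.validIn A C

/-! ### Simplification orders and their bag extensions -/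

/-- A simplification order: a reduction ordering that is total on ground terms
and has the subterm property. -/
structure SimpOrd (F : Type) (ar : F → ℕ) : Type where
  gt : Trm F ar → Trm F ar → Prop
  trans : ∀ {s t u : Trm F ar}, gt s t → gt t u → gt s u
  irrefl : ∀ s : Trm F ar, ¬ gt s s
  wf : WellFounded (fun s t : Trm F ar => gt t s)
  substStable : ∀ (σ : Subst F ar) {s t : Trm F ar}, gt s t →
    gt (Trm.subst σ s) (Trm.subst σ t)
  ctxStable : ∀ (s : Trm F ar) (p : List ℕ) {l r : Trm F ar}, (Trm.atPos s p).isSome →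
    gt l r → gt (Trm.replace s p l) (Trm.replace s p r)
  subterm : ∀ {s t : Trm F ar} (p : List ℕ), Trm.atPos s p = some t → s ≠ t → gt s t
  totalGround : ∀ {s t : Trm F ar}, s.IsGround → t.IsGround → s ≠ t → gt s t ∨ gt t s

/-- Bag (Dershowitz–Manna multiset) extension of an ordering: `N > M`. -/
def MultGT {α : Type} (r : α → α → Prop) (N M : Multiset α) : Prop :=
  ∃ X Y Z : Multiset α, X ≠ 0 ∧ N = Z + X ∧ M = Z + Y ∧ ∀ y ∈ Y, ∃ x ∈ X, r x y

/-- The multiset of terms associated to a literal: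
`{s, t}` for `s ≈ t` and `{s, s, t, t}` for `s ≉ t`. -/
def Lit.ms (L : Lit F ar) : Multiset (Trm F ar) :=
  if L.pos then {L.lhs, L.rhs} else {L.lhs, L.lhs, L.rhs, L.rhs}

/-- The induced ordering on literals. -/
def litGT (O : SimpOrd F ar) (L M : Lit F ar) : Prop := MultGT O.gt L.ms M.ms

/-- The induced ordering on clauses. -/
def clauseGT (O : SimpOrd F ar) (C D : Clause F ar) : Prop := MultGT (litGT O) C D

def clauseGE (O : SimpOrd F ar) (C D : Clause F ar) : Prop := clauseGT O C D ∨ C = D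

/-- A ground clause `D` is redundant w.r.t. a set `S` of ground clauses if it is
entailed by finitely many clauses of `S` that are all smaller than `D`. -/
def Redundant (O : SimpOrd F ar) (S : Set (Clause F ar)) (D : Clause F ar) : Prop :=
  ∃ Cs : List (Clause F ar), (∀ C ∈ Cs, C ∈ S) ∧
    Entails {C | C ∈ Cs} D ∧ ∀ C ∈ Cs, clauseGT O D C

/-! ### Redundancy formulas and partial clauses -/

/-- Redundancy formulas: first-order formulas over the term algebra extended with
the interpreted predicates `≻` (the simplification order) and equality. -/
inductive RForm (F : Type) (ar : F → ℕ) : Type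
  | falsum : RForm F ar
  | verum : RForm F ar
  | eq (s t : Trm F ar) : RForm F ar
  | gt (s t : Trm F ar) : RForm F ar
  | and (a b : RForm F ar) : RForm F ar
  | or (a b : RForm F ar) : RForm F ar
  | ex (x : ℕ) (a : RForm F ar) : RForm F ar

def RForm.subst (σ : Subst F ar) : RForm F ar → RForm F ar
  | .falsum => .falsum
  | .verum => .verum
  | .eq s t => .eq (Trm.subst σ s) (Trm.subst σ t)
  | .gt s t => .gt (Trm.subst σ s) (Trm.subst σ t)
  | .and a b => .and (a.subst σ) (b.subst σ)
  | .or a b => .or (a.subst σ) (b.subst σ)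
  | .ex x a => .ex x (a.subst fun y => if y = x then Trm.var x else σ y)

def RForm.fvars : RForm F ar → Set ℕ
  | .falsum => ∅
  | .verum => ∅
  | .eq s t => s.fvars ∪ t.fvars
  | .gt s t => s.fvars ∪ t.fvars
  | .and a b => a.fvars ∪ b.fvars
  | .or a b => a.fvars ∪ b.fvars
  | .ex x a => a.fvars \ {x}

/-- Truth of a redundancy formula in the extended term algebra `T_R(Σ)`,
under a valuation `v` mapping variables to (ground) terms. -/
def RForm.realize (O : SimpOrd F ar) (v : Subst F ar) : RForm F ar → Prop
  | .falsum => False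
  | .verum => True
  | .eq s t => Trm.subst v s = Trm.subst v t
  | .gt s t => O.gt (Trm.subst v s) (Trm.subst v t)
  | .and a b => a.realize O v ∧ b.realize O v
  | .or a b => a.realize O v ∨ b.realize O v
  | .ex x a => ∃ g : Trm F ar, g.IsGround ∧ a.realize O (Function.update v x g)

/-- `σ ⊨ R`: every ground instance of `Rσ` is true in `T_R(Σ)`. -/
def RSat (O : SimpOrd F ar) (σ : Subst F ar) (R : RForm F ar) : Prop :=
  ∀ v : Subst F ar, (∀ x, (v x).IsGround) → RForm.realize O v (RForm.subst σ R)

theorem RForm.falsum_fvars_sub (s : Set ℕ) : RForm.fvars (.falsum : RForm F ar) ⊆ s := by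
  intro x hx; simp [RForm.fvars] at hx

/-- `s ⪰ t` as a redundancy formula. -/
def RForm.ge (s t : Trm F ar) : RForm F ar := .or (.gt s t) (.eq s t)

/-- `(s ≐ t) ⪰ l` as a redundancy formula. -/
def Lit.geForm (L : Lit F ar) (l : Trm F ar) : RForm F ar :=
  .or (RForm.ge L.lhs l) (RForm.ge L.rhs l)

/-- `(s ≐ t) ≻ l` as a redundancy formula. -/
def Lit.gtForm (L : Lit F ar) (l : Trm F ar) : RForm F ar :=
  .or (.gt L.lhs l) (.gt L.rhs l)

/-- `C ⪰ l` as a redundancy formula (disjunction over the literals of `C`). -/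
noncomputable def Clause.geForm (C : Clause F ar) (l : Trm F ar) : RForm F ar :=
  C.toList.foldr (fun L acc => RForm.or (Lit.geForm L l) acc) RForm.falsum

/-- `C ≻ l` as a redundancy formula (disjunction over the literals of `C`). -/
noncomputable def Clause.gtForm (C : Clause F ar) (l : Trm F ar) : RForm F ar :=
  C.toList.foldr (fun L acc => RForm.or (Lit.gtForm L l) acc) RForm.falsum

/-- A partial clause `C ⋈ R`: a clause together with a redundancy formula all of
whose free variables occur in the clause. -/
structure PClause (F : Type) (ar : F → ℕ) : Type where
  cl : Clause F ar
  rf : RForm F ar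
  hfv : RForm.fvars rf ⊆ Clause.fvars cl

/-- `⌊C ⋈ R⌋`: the ground instances `Cθ` with `θ ⊭ R`. -/
def pgnd (O : SimpOrd F ar) (pc : PClause F ar) : Set (Clause F ar) :=
  {D | ∃ θ : Subst F ar, D = Clause.subst θ pc.cl ∧ Clause.IsGround D ∧ ¬ RSat O θ pc.rf}

/-- `⌊S⌋` for a set of partial clauses. -/
def gndS (O : SimpOrd F ar) (S : Set (PClause F ar)) : Set (Clause F ar) :=
  ⋃ pc ∈ S, pgnd O pc

/-- `S*`: all ground instances of clauses occurring in `S`. -/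
def gstar (S : Set (PClause F ar)) : Set (Clause F ar) :=
  {D | ∃ pc ∈ S, ∃ θ : Subst F ar, D = Clause.subst θ pc.cl ∧ Clause.IsGround D}

/-! ### The PaRC calculus -/

def IsUnifier (σ : Subst F ar) (s t : Trm F ar) : Prop := Trm.subst σ s = Trm.subst σ t

def IsMGU (σ : Subst F ar) (s t : Trm F ar) : Prop :=
  IsUnifier σ s t ∧ ∀ η : Subst F ar, IsUnifier η s t → ∃ μ : Subst F ar, η = Subst.comp σ μ

/-- A literal selection function satisfying the standard condition w.r.t. `≻`. -/
structure SelFun (F : Type) (ar : F → ℕ) (O : SimpOrd F ar) : Type where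
  sel : Clause F ar → Set (Lit F ar)
  subset : ∀ C : Clause F ar, sel C ⊆ {L | L ∈ C}
  nonemptyOn : ∀ C : Clause F ar, C ≠ 0 → (sel C).Nonempty
  standard : ∀ C : Clause F ar,
    (∃ L ∈ sel C, L.pos = false) ∨ ∀ L ∈ sel C, ∀ M ∈ C, ¬ litGT O M L

/-- The inference rules of the PaRC calculus on partial clauses.
`Inf O sel prems σ concl` means: there is a PaRC inference with premises `prems`,
most general unifier `σ`, and conclusion `concl`; selected literals are the displayed
first literals of the premises. -/
inductive Inf (O : SimpOrd F ar) (sel : SelFun F ar O) :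
    List (PClause F ar) → Subst F ar → Clause F ar → Prop
  | sup {l r : Trm F ar} {C₁ : Clause F ar} {R₁ : RForm F ar}
      {h₁ : RForm.fvars R₁ ⊆ Clause.fvars (Lit.mk true l r ::ₘ C₁)}
      {b : Bool} {s t : Trm F ar} {C₂ : Clause F ar} {R₂ : RForm F ar}
      {h₂ : RForm.fvars R₂ ⊆ Clause.fvars (Lit.mk b s t ::ₘ C₂)}
      {p : List ℕ} {l' : Trm F ar} {σ : Subst F ar} :
      Trm.atPos s p = some l' →
      (∀ x, l' ≠ .var x) →
      IsMGU σ l l' →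
      Lit.mk true l r ∈ sel.sel (Lit.mk true l r ::ₘ C₁) →
      Lit.mk b s t ∈ sel.sel (Lit.mk b s t ::ₘ C₂) →
      ¬ RSat O σ (RForm.ge r l) →
      ¬ RSat O σ (RForm.ge t s) →
      ¬ RSat O σ (Clause.geForm C₁ l) →
      (b = true → ¬ RSat O σ (Clause.geForm C₂ s)) →
      ¬ RSat O σ R₁ →
      ¬ RSat O σ R₂ →
      Inf O sel [⟨Lit.mk true l r ::ₘ C₁, R₁, h₁⟩, ⟨Lit.mk b s t ::ₘ C₂, R₂, h₂⟩] σ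
        (Clause.subst σ (Lit.mk b (Trm.replace s p r) t ::ₘ (C₁ + C₂)))
  | eqres {s t : Trm F ar} {C : Clause F ar} {R : RForm F ar}
      {h : RForm.fvars R ⊆ Clause.fvars (Lit.mk false s t ::ₘ C)} {σ : Subst F ar} :
      IsMGU σ s t →
      Lit.mk false s t ∈ sel.sel (Lit.mk false s t ::ₘ C) →
      ¬ RSat O σ R →
      Inf O sel [⟨Lit.mk false s t ::ₘ C, R, h⟩] σ (Clause.subst σ C)
  | eqfac {s t s' t' : Trm F ar} {C : Clause F ar} {R : RForm F ar}
      {h : RForm.fvars R ⊆ Clause.fvars (Lit.mk true s t ::ₘ Lit.mk true s' t' ::ₘ C)}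
      {σ : Subst F ar} :
      IsMGU σ s s' →
      Lit.mk true s t ∈ sel.sel (Lit.mk true s t ::ₘ Lit.mk true s' t' ::ₘ C) →
      Lit.mk true s' t' ∈ sel.sel (Lit.mk true s t ::ₘ Lit.mk true s' t' ::ₘ C) →
      ¬ RSat O σ (RForm.ge t s) →
      ¬ RSat O σ (RForm.gt t' t) →
      ¬ RSat O σ (Clause.gtForm C s) →
      ¬ RSat O σ R →
      Inf O sel [⟨Lit.mk true s t ::ₘ Lit.mk true s' t' ::ₘ C, R, h⟩] σ
        (Clause.subst σ (Lit.mk true s t ::ₘ Lit.mk false t t' ::ₘ C))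

/-! ### Saturation -/

/-- A saturation w.r.t. the PaRC calculus: `S 0` consists of partial clauses of the
form `C ⋈ ⊥`, and each step is either an inference step or a redundancy step. -/
structure Saturation (O : SimpOrd F ar) (sel : SelFun F ar O) : Type where
  S : ℕ → Set (PClause F ar)
  init : ∀ pc ∈ S 0, pc.rf = RForm.falsum
  step : ∀ i : ℕ,
    (∃ (prems : List (PClause F ar)) (σ : Subst F ar) (concl : Clause F ar),
        (∀ pc ∈ prems, pc ∈ S i) ∧ Inf O sel prems σ concl ∧
        S (i + 1) = S i ∪ {⟨concl, RForm.falsum, RForm.falsum_fvars_sub _⟩}) ∨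
    (∃ pc ∈ S i, ∃ (R₂ : RForm F ar)
        (h : RForm.fvars (RForm.or pc.rf R₂) ⊆ Clause.fvars pc.cl),
        (∀ θ : Subst F ar, GroundingFor θ pc.cl → RSat O θ R₂ →
          Redundant O (gstar (S i)) (Clause.subst θ pc.cl)) ∧
        S (i + 1) = (S i \ {pc}) ∪ {⟨pc.cl, RForm.or pc.rf R₂, h⟩})

variable {O : SimpOrd F ar} {sel : SelFun F ar O}

/-- `S_ω = ⋃ i, S i`. -/
def Saturation.Somega (𝕊 : Saturation O sel) : Set (PClause F ar) := ⋃ i, 𝕊.S i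

/-- The limit `⋃_{i≥0} ⋂_{j≥i} ⌊S_j⌋` of a saturation. -/
def Saturation.limit (𝕊 : Saturation O sel) : Set (Clause F ar) :=
  ⋃ i : ℕ, ⋂ j : ℕ, ⋂ (_ : j ≥ i), gndS O (𝕊.S j)

/-- A ground clause is persistent if it belongs to the limit. -/
def Saturation.Persistent (𝕊 : Saturation O sel) (C : Clause F ar) : Prop := C ∈ 𝕊.limit

/-- Fairness of a saturation. -/
def Saturation.Fair (𝕊 : Saturation O sel) : Prop :=
  ∀ (prems : List (PClause F ar)) (σ : Subst F ar) (concl : Clause F ar) (ρ : Subst F ar),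
    Inf O sel prems σ concl →
    (∀ pc ∈ prems, 𝕊.Persistent (Clause.subst ρ (Clause.subst σ pc.cl))) →
    ∃ i : ℕ, (⟨concl, RForm.falsum, RForm.falsum_fvars_sub _⟩ : PClause F ar) ∈ 𝕊.S i

/-! ### Ground rewrite systems and the model construction -/

/-- One-step ground rewriting with a set of (ground) rewrite rules. -/
def Rw (I : Set (Trm F ar × Trm F ar)) (s t : Trm F ar) : Prop :=
  ∃ lr ∈ I, ∃ p : List ℕ, Trm.atPos s p = some lr.1 ∧ t = Trm.replace s p lr.2

def RwStar (I : Set (Trm F ar × Trm F ar)) : Trm F ar → Trm F ar → Prop :=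
  Relation.ReflTransGen (Rw I)

/-- A term is irreducible (a normal form) in `I`. -/
def NormalForm (I : Set (Trm F ar × Trm F ar)) (t : Trm F ar) : Prop := ∀ u, ¬ Rw I t u

/-- `s` and `t` have the same normal form in `I`. -/
def SameNF (I : Set (Trm F ar × Trm F ar)) (s t : Trm F ar) : Prop :=
  ∃ u : Trm F ar, RwStar I s u ∧ RwStar I t u ∧ NormalForm I u

/-- Truth of a ground clause in the interpretation given by a rewrite system. -/
def TrueIn (I : Set (Trm F ar × Trm F ar)) (C : Clause F ar) : Prop :=
  ∃ L ∈ C, if L.pos then SameNF I L.lhs L.rhs else ¬ SameNF I L.lhs L.rhs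

def NonOverlapping (I : Set (Trm F ar × Trm F ar)) : Prop :=
  ∀ lr ∈ I, ∀ lr' ∈ I, lr ≠ lr' → ∀ p : List ℕ, Trm.atPos (Prod.fst lr) p ≠ some (Prod.fst lr')

def Terminating (I : Set (Trm F ar × Trm F ar)) : Prop :=
  WellFounded (fun s t : Trm F ar => Rw I t s)

def Confluent (I : Set (Trm F ar × Trm F ar)) : Prop :=
  ∀ a b c : Trm F ar, RwStar I a b → RwStar I a c → ∃ d, RwStar I b d ∧ RwStar I c d

/-- The productivity condition of the model construction: there is a partial clause
`(l₁ ≈ r₁ ∨ C ⋈ R) ∈ S_ω` (with `l₁ ≈ r₁` selected) and a grounding substitution `θ`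
with `l₁θ = l`, `l₁θ ≻ r₁θ`, `l₁θ ≻ Cθ`, `θ ⊭ R`, `I_{≺l} ⊭ Cθ`, producing the rule
`l → rr` where `rr = r₁θ`. -/
def ProducesWith (O : SimpOrd F ar) (sel : SelFun F ar O) (Sω : Set (PClause F ar))
    (Ipre : Set (Trm F ar × Trm F ar)) (l rr : Trm F ar) : Prop :=
  ∃ (l₁ r₁ : Trm F ar) (C : Clause F ar) (R : RForm F ar)
    (h : RForm.fvars R ⊆ Clause.fvars (Lit.mk true l₁ r₁ ::ₘ C)) (θ : Subst F ar),
    (⟨Lit.mk true l₁ r₁ ::ₘ C, R, h⟩ : PClause F ar) ∈ Sω ∧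
    Lit.mk true l₁ r₁ ∈ sel.sel (Lit.mk true l₁ r₁ ::ₘ C) ∧
    GroundingFor θ (Lit.mk true l₁ r₁ ::ₘ C) ∧
    Trm.subst θ l₁ = l ∧
    O.gt (Trm.subst θ l₁) (Trm.subst θ r₁) ∧
    (∀ L ∈ Clause.subst θ C, O.gt (Trm.subst θ l₁) L.lhs ∧ O.gt (Trm.subst θ l₁) L.rhs) ∧
    ¬ RSat O θ R ∧
    ¬ TrueIn Ipre (Clause.subst θ C) ∧
    rr = Trm.subst θ r₁

/-- The rewrite system `I_l` of the model construction, defined by well-founded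
recursion on `≻`. -/
noncomputable def Interp (O : SimpOrd F ar) (sel : SelFun F ar O)
    (Sω : Set (PClause F ar)) : Trm F ar → Set (Trm F ar × Trm F ar) :=
  WellFounded.fix (C := fun _ => Set (Trm F ar × Trm F ar)) O.wf
    (fun l Irec =>
      let Ipre : Set (Trm F ar × Trm F ar) := ⋃ (r : Trm F ar), ⋃ (h : O.gt l r), Irec r h
      letI := Classical.propDecidable
      if h : NormalForm Ipre l ∧ ∃ rr, ProducesWith O sel Sω Ipre l rr then
        Ipre ∪ {(l, h.2.choose)}
      else Ipre)

/-- The rewrite system `I_{≺l}` of the model construction. -/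
noncomputable def IPre (O : SimpOrd F ar) (sel : SelFun F ar O)
    (Sω : Set (PClause F ar)) (l : Trm F ar) : Set (Trm F ar × Trm F ar) :=
  ⋃ (r : Trm F ar), ⋃ (_ : O.gt l r), Interp O sel Sω r

/-- The rewrite system `I_ω = ⋃_l I_l` of the model construction. -/
noncomputable def IOmega (O : SimpOrd F ar) (sel : SelFun F ar O)
    (Sω : Set (PClause F ar)) : Set (Trm F ar × Trm F ar) :=
  ⋃ (l : Trm F ar), Interp O sel Sω l

/-!
A clause of `S_j*` that is not in `⌊S_j⌋` is an instance `Cθ` of some `C ⋈ R ∈ S_j` with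
`θ ⊨ R`. Along a saturation, `S*` never shrinks and a redundancy step only marks instances
that are redundant at that moment, so every such `Cθ` is redundant w.r.t. `S_j*`. Redundancy
w.r.t. a set is not affected by discarding clauses that are themselves redundant in it
(well-founded induction on the clause order, using transitivity of the order and of
entailment), which gives the nontrivial direction.
-/

section BagExtension

variable {α : Type} {r : α → α → Prop} {N M P : Multiset α}

theorem multGT_gt_iff_isDershowitzMannaLT [Preorder α] :
    MultGT (· > ·) N M ↔ M.IsDershowitzMannaLT N := by
  simp only [MultGT, Multiset.IsDershowitzMannaLT, Multiset.empty_eq_zero]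
  constructor
  · rintro ⟨X, Y, Z, h⟩
    exact ⟨Z, Y, X, h.1, h.2.2.1, h.2.1, h.2.2.2⟩
  · rintro ⟨Z, Y, X, h⟩
    exact ⟨X, Y, Z, h.1, h.2.2.1, h.2.1, h.2.2.2⟩

theorem MultGT.trans [IsStrictOrder α r] (h₁ : MultGT r N M) (h₂ : MultGT r M P) :
    MultGT r N P := by
  let := partialOrderOfSO (Function.swap r)
  exact multGT_gt_iff_isDershowitzMannaLT.2
    ((multGT_gt_iff_isDershowitzMannaLT.1 h₂).trans (multGT_gt_iff_isDershowitzMannaLT.1 h₁))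

theorem MultGT.wellFounded [IsStrictOrder α r] (h : WellFounded (Function.swap r)) :
    WellFounded (Function.swap (MultGT r)) := by
  let := partialOrderOfSO (Function.swap r)
  have : WellFoundedLT α := ⟨h⟩
  exact Subrelation.wf multGT_gt_iff_isDershowitzMannaLT.1
    Multiset.wellFounded_isDershowitzMannaLT

end BagExtension

instance SimpOrd.isStrictOrder : IsStrictOrder (Trm F ar) O.gt where
  irrefl := O.irrefl
  trans _ _ _ := O.trans

theorem litGT_wellFounded : WellFounded (Function.swap (litGT O)) :=
  InvImage.wf Lit.ms (MultGT.wellFounded O.wf)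

instance litGT.isStrictOrder : IsStrictOrder (Lit F ar) (litGT O) where
  irrefl L h := litGT_wellFounded.asymmetric L L h h
  trans _ _ _ := MultGT.trans

theorem clauseGT_trans {C D E : Clause F ar} (h₁ : clauseGT O C D) (h₂ : clauseGT O D E) :
    clauseGT O C E :=
  MultGT.trans h₁ h₂

theorem clauseGT_wellFounded : WellFounded (Function.swap (clauseGT O)) :=
  MultGT.wellFounded litGT_wellFounded

section Redundancy

variable {S T : Set (Clause F ar)} {D : Clause F ar}

theorem Entails.mono (h : S ⊆ T) (hD : Entails S D) : Entails T D :=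
  fun A hA => hD A fun C hC => hA C (h hC)

theorem Entails.trans (hS : ∀ C ∈ S, Entails T C) (hD : Entails S D) : Entails T D :=
  fun A hA => hD A fun C hC => hS C hC A hA

theorem Redundant.mono (h : S ⊆ T) : Redundant O S D → Redundant O T D :=
  fun ⟨Cs, hCs, hent, hlt⟩ => ⟨Cs, fun C hC => h (hCs C hC), hent, hlt⟩

theorem exists_le_entailing_of_mem_or_redundant (h : D ∈ T ∨ Redundant O T D) :
    ∃ Ds : List (Clause F ar),
      (∀ E ∈ Ds, E ∈ T) ∧ Entails {E | E ∈ Ds} D ∧ ∀ E ∈ Ds, clauseGE O D E := by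
  rcases h with hD | ⟨Ds, hDs, hent, hlt⟩
  · refine ⟨[D], by simpa using hD, fun A hA => hA D (List.mem_singleton_self D), ?_⟩
    simp [clauseGE]
  · exact ⟨Ds, hDs, hent, fun E hE => .inl (hlt E hE)⟩

theorem Redundant.of_forall_lt_mem_or_redundant (hD : Redundant O S D)
    (h : ∀ C ∈ S, clauseGT O D C → C ∈ T ∨ Redundant O T C) : Redundant O T D := by
  obtain ⟨Cs, hCs, hent, hlt⟩ := hD
  have hcover : ∀ C, ∃ Ds : List (Clause F ar), C ∈ Cs →
      (∀ E ∈ Ds, E ∈ T) ∧ Entails {E | E ∈ Ds} C ∧ ∀ E ∈ Ds, clauseGE O C E := by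
    intro C
    by_cases hC : C ∈ Cs
    · exact (exists_le_entailing_of_mem_or_redundant (h C (hCs C hC) (hlt C hC))).imp
        fun _ hDs _ => hDs
    · exact ⟨[], fun hC' => absurd hC' hC⟩
  choose cover hcover using hcover
  refine ⟨Cs.flatMap cover, ?_, ?_, ?_⟩
  · simp only [List.mem_flatMap]
    rintro E ⟨C, hC, hE⟩
    exact (hcover C hC).1 E hE
  · refine Entails.trans (fun C hC => ?_) hent
    exact (hcover C hC).2.1.mono fun E hE => List.mem_flatMap.2 ⟨C, hC, hE⟩
  · simp only [List.mem_flatMap]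
    rintro E ⟨C, hC, hE⟩
    rcases (hcover C hC).2.2 E hE with hCE | rfl
    exacts [clauseGT_trans (hlt C hC) hCE, hlt C hC]

theorem Redundant.of_forall_mem_or_redundant (h : ∀ C ∈ S, C ∈ T ∨ Redundant O S C)
    (hD : Redundant O S D) : Redundant O T D := by
  induction D using (clauseGT_wellFounded (O := O)).induction with
  | h D ih =>
    refine hD.of_forall_lt_mem_or_redundant fun C hC hlt => ?_
    exact (h C hC).imp_right (ih C hlt)

end Redundancy

theorem Trm.IsGround.notMem_fvars {t : Trm F ar} (h : t.IsGround) (x : ℕ) : x ∉ t.fvars := by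
  induction t with
  | var y => exact h.elim
  | app f a ih =>
    simp only [Trm.fvars, Set.mem_iUnion, not_exists]
    exact fun i => ih i (h i)

theorem Trm.isGround_apply_of_isGround_subst {θ : Subst F ar} {t : Trm F ar}
    (h : (t.subst θ).IsGround) {x : ℕ} (hx : x ∈ t.fvars) : (θ x).IsGround := by
  induction t with
  | var y => rwa [Set.mem_singleton_iff.1 hx]
  | app f a ih =>
    obtain ⟨i, hi⟩ := Set.mem_iUnion.1 hx
    exact ih i (h i) hi

theorem GroundingFor.isGround_apply {θ : Subst F ar} {C : Clause F ar} (h : GroundingFor θ C)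
    {x : ℕ} (hx : x ∈ C.fvars) : (θ x).IsGround := by
  obtain ⟨L, hL, hxL⟩ := hx
  have hg : (L.subst θ).IsGround := h _ (Multiset.mem_map_of_mem _ hL)
  rcases hxL with hx | hx
  exacts [Trm.isGround_apply_of_isGround_subst hg.1 hx,
    Trm.isGround_apply_of_isGround_subst hg.2 hx]

theorem Trm.subst_congr {v w : Subst F ar} {t : Trm F ar} (h : ∀ x ∈ t.fvars, v x = w x) :
    t.subst v = t.subst w := by
  induction t with
  | var y => exact h y rfl
  | app f a ih =>
    simp only [Trm.subst]
    exact congrArg _ (funext fun i => ih i fun x hx => h x (Set.mem_iUnion.2 ⟨i, hx⟩))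

theorem Trm.mem_fvars_subst {θ : Subst F ar} {t : Trm F ar} {y : ℕ}
    (hy : y ∈ (t.subst θ).fvars) : ∃ x ∈ t.fvars, y ∈ (θ x).fvars := by
  induction t with
  | var z => exact ⟨z, rfl, hy⟩
  | app f a ih =>
    obtain ⟨i, hi⟩ := Set.mem_iUnion.1 hy
    obtain ⟨x, hx, hyx⟩ := ih i hi
    exact ⟨x, Set.mem_iUnion.2 ⟨i, hx⟩, hyx⟩

theorem RForm.mem_fvars_subst {R : RForm F ar} {θ : Subst F ar} {y : ℕ}
    (hy : y ∈ (R.subst θ).fvars) : ∃ x ∈ R.fvars, y ∈ (θ x).fvars := by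
  induction R generalizing θ with
  | falsum | verum => simp [RForm.subst, RForm.fvars] at hy
  | eq s t | gt s t =>
    rcases hy with hy | hy <;> obtain ⟨x, hx, hyx⟩ := Trm.mem_fvars_subst hy
    exacts [⟨x, .inl hx, hyx⟩, ⟨x, .inr hx, hyx⟩]
  | and a b iha ihb | or a b iha ihb =>
    rcases hy with hy | hy
    · obtain ⟨x, hx, hyx⟩ := iha hy
      exact ⟨x, .inl hx, hyx⟩
    · obtain ⟨x, hx, hyx⟩ := ihb hy
      exact ⟨x, .inr hx, hyx⟩
  | ex x a ih =>
    obtain ⟨hy, hyx⟩ := hy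
    obtain ⟨z, hz, hyz⟩ := ih hy
    by_cases hzx : z = x
    · simp only [hzx, if_true] at hyz
      exact absurd hyz hyx
    · rw [if_neg hzx] at hyz
      exact ⟨z, ⟨hz, hzx⟩, hyz⟩

theorem RForm.realize_congr {R : RForm F ar} {v w : Subst F ar}
    (h : ∀ x ∈ R.fvars, v x = w x) : R.realize O v ↔ R.realize O w := by
  induction R generalizing v w with
  | falsum | verum => exact Iff.rfl
  | eq s t | gt s t =>
    simp only [RForm.realize]
    rw [Trm.subst_congr fun x hx => h x (.inl hx), Trm.subst_congr fun x hx => h x (.inr hx)]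
  | and a b iha ihb =>
    exact and_congr (iha fun x hx => h x (.inl hx)) (ihb fun x hx => h x (.inr hx))
  | or a b iha ihb =>
    exact or_congr (iha fun x hx => h x (.inl hx)) (ihb fun x hx => h x (.inr hx))
  | ex x a ih =>
    refine exists_congr fun g => and_congr_right fun _ => ih fun z hz => ?_
    by_cases hzx : z = x
    · simp [hzx]
    · simpa [Function.update_of_ne hzx] using h z ⟨hz, hzx⟩

theorem RForm.realize_subst_iff_of_isGround {R : RForm F ar} {θ : Subst F ar}
    (hθ : ∀ x ∈ R.fvars, (θ x).IsGround) (v w : Subst F ar) :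
    (R.subst θ).realize O v ↔ (R.subst θ).realize O w := by
  refine RForm.realize_congr fun y hy => ?_
  obtain ⟨x, hx, hyx⟩ := RForm.mem_fvars_subst hy
  exact absurd hyx ((hθ x hx).notMem_fvars y)

theorem RSat.or_split_of_isGround {θ : Subst F ar} {R₁ R₂ : RForm F ar}
    (hθ : ∀ x ∈ R₂.fvars, (θ x).IsGround) (h : RSat O θ (.or R₁ R₂)) :
    RSat O θ R₁ ∨ RSat O θ R₂ := by
  refine or_iff_not_imp_left.2 fun h₁ v hv => ?_
  obtain ⟨w, hw, hw₁⟩ : ∃ w, (∀ x, (w x).IsGround) ∧ ¬ (R₁.subst θ).realize O w := by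
    simpa [RSat] using h₁
  exact (RForm.realize_subst_iff_of_isGround hθ w v).1 ((h w hw).resolve_left hw₁)

theorem not_rSat_falsum (hconst : ∃ c : F, ar c = 0) (θ : Subst F ar) :
    ¬ RSat O θ .falsum := by
  obtain ⟨c, hc⟩ := hconst
  intro h
  exact h (fun _ => .app c fun i => .var i) fun _ i => (hc ▸ i).elim0

theorem gstar_mono {S T : Set (PClause F ar)} (h : ∀ pc ∈ S, ∃ pc' ∈ T, pc'.cl = pc.cl) :
    gstar S ⊆ gstar T := by
  rintro D ⟨pc, hpc, θ, rfl, hg⟩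
  obtain ⟨pc', hpc', hcl⟩ := h pc hpc
  exact ⟨pc', hpc', θ, by rw [hcl], hg⟩

theorem gndS_subset_gstar (S : Set (PClause F ar)) : gndS O S ⊆ gstar S := by
  intro D hD
  obtain ⟨pc, hpc, θ, hD, hg, -⟩ := Set.mem_iUnion₂.1 hD
  exact ⟨pc, hpc, θ, hD, hg⟩

theorem Saturation.gstar_subset_succ (𝕊 : Saturation O sel) (i : ℕ) :
    gstar (𝕊.S i) ⊆ gstar (𝕊.S (i + 1)) := by
  refine gstar_mono fun pc hpc => ?_
  rcases 𝕊.step i with ⟨_, _, _, _, _, hS⟩ | ⟨pc₀, _, R₂, h, _, hS⟩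
  · exact ⟨pc, hS ▸ .inl hpc, rfl⟩
  · by_cases hpc₀ : pc = pc₀
    · subst hpc₀
      exact ⟨⟨pc.cl, .or pc.rf R₂, h⟩, hS ▸ .inr rfl, rfl⟩
    · exact ⟨pc, hS ▸ .inl ⟨hpc, hpc₀⟩, rfl⟩

theorem Saturation.redundant_of_rSat (hconst : ∃ c : F, ar c = 0) (𝕊 : Saturation O sel)
    (j : ℕ) {pc : PClause F ar} (hpc : pc ∈ 𝕊.S j) {θ : Subst F ar}
    (hθ : GroundingFor θ pc.cl) (hR : RSat O θ pc.rf) :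
    Redundant O (gstar (𝕊.S j)) (Clause.subst θ pc.cl) := by
  induction j generalizing pc with
  | zero => exact absurd (𝕊.init pc hpc ▸ hR) (not_rSat_falsum hconst θ)
  | succ i ih =>
    refine Redundant.mono (𝕊.gstar_subset_succ i) ?_
    rcases 𝕊.step i with ⟨_, _, _, _, _, hS⟩ | ⟨pc₀, hpc₀, R₂, h, hred, hS⟩
    · rw [hS] at hpc
      rcases hpc with hpc | rfl
      exacts [ih hpc hθ hR, absurd hR (not_rSat_falsum hconst θ)]
    · rw [hS] at hpc
      rcases hpc with ⟨hpc, -⟩ | rfl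
      · exact ih hpc hθ hR
      · have hθ₂ : ∀ x ∈ R₂.fvars, (θ x).IsGround := fun x hx =>
          hθ.isGround_apply (h (.inr hx))
        rcases RSat.or_split_of_isGround hθ₂ hR with hR₁ | hR₂
        exacts [ih (pc := pc₀) hpc₀ hθ hR₁, hred θ hθ hR₂]

theorem Saturation.mem_gndS_or_redundant (hconst : ∃ c : F, ar c = 0) (𝕊 : Saturation O sel)
    (j : ℕ) : ∀ C ∈ gstar (𝕊.S j), C ∈ gndS O (𝕊.S j) ∨ Redundant O (gstar (𝕊.S j)) C := by
  rintro C ⟨pc, hpc, θ, rfl, hg⟩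
  by_cases hR : RSat O θ pc.rf
  · exact .inr (𝕊.redundant_of_rSat hconst j hpc hg hR)
  · exact .inl (Set.mem_biUnion hpc ⟨θ, rfl, hg, hR⟩)

theorem redundant_gstar_iff_gnd_general {F : Type} {ar : F → ℕ} (hconst : ∃ c : F, ar c = 0)
    (O : SimpOrd F ar) (sel : SelFun F ar O) (𝕊 : Saturation O sel) :
    ∀ (j : ℕ) (C : Clause F ar), Clause.IsGround C →
      (Redundant O (gstar (𝕊.S j)) C ↔ Redundant O (gndS O (𝕊.S j)) C) := by
  intro j C _
  exact ⟨.of_forall_mem_or_redundant (𝕊.mem_gndS_or_redundant hconst j),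
    .mono (gndS_subset_gstar _)⟩

/-- For every `j`, a ground clause is redundant w.r.t. `S j *`
iff it is redundant w.r.t. `⌊S j⌋`. -/
theorem redundant_gstar_iff_gnd {F : Type} {ar : F → ℕ} (hF : Finite F) (hconst : ∃ c : F, ar c = 0)
    (O : SimpOrd F ar) (sel : SelFun F ar O) (𝕊 : Saturation O sel) :
    ∀ (j : ℕ) (C : Clause F ar), Clause.IsGround C →
      (Redundant O (gstar (𝕊.S j)) C ↔ Redundant O (gndS O (𝕊.S j)) C) :=
  redundant_gstar_iff_gnd_general hconst O sel 𝕊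

end PaRC
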